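/- Let M ⊂ R^d be a nonempty open Z^d-periodic set, Y = [0,1)^d, n ∈ N, and 1 ≤ p < ∞. Then every function φ ∈ L^p(M ∩ nY) that is the restriction of a Z^d-periodic function admits a periodic extension φ̃ ∈ L^p(nY) satisfying ∫_Y |φ̃|^p dy ≤ c ∫_{M∩Y} |φ|^p dy and ∫_{(nY)²} |φ̃(x) − φ̃(y)|^p dx dy ≤ c² ∫_{(M∩nY)²} |φ(x) − φ(y)|^p dx dy, where c = 1 + |Y \ M|/|M ∩ Y|. -/

import Mathlib

/-!
Extend `φ` off `M` by the constant `A = ⨍_{M ∩ nY} φ`, which by periodicity is the mean of `φ` over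
every cell `M ∩ (i + Y)`. Jensen's inequality for `t ↦ |b - t|ᵖ` gives
`|b - A|ᵖ |M ∩ nY| ≤ ∫_{M ∩ nY} |b - φ|ᵖ`. For `b = 0` this controls the mass `|A|ᵖ |Y \ M|` added
on a cell; for `b = φ x` it controls the pairs `(x, y)` with exactly one point off `M`, giving the
energy bound with constant `1 + 2 |Y \ M| / |M ∩ Y| ≤ c²`. Since `nY` is tiled by `nᵈ` integer
translates of `Y`, volumes and integrals of periodic functions over `nY` are `nᵈ` times those
over `Y`, so all ratios may be computed on either.
-/

open MeasureTheory ENNReal Set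

lemma ENNReal.mul_le_div_mul_of_mul_le {a b c e : ℝ≥0∞} (hb0 : b ≠ 0) (hbtop : b ≠ ∞)
    (h : a * b ≤ c) : a * e ≤ e / b * c := by
  have ha : a ≤ c / b := (ENNReal.le_div_iff_mul_le (Or.inl hb0) (Or.inl hbtop)).2 h
  calc a * e ≤ c / b * e := by gcongr
    _ = e / b * c := by rw [ENNReal.div_eq_inv_mul, ENNReal.div_eq_inv_mul]; ring

lemma ENNReal.ofReal_one_add_toReal_div {a b : ℝ≥0∞} (ha : a ≠ ∞) (hb : b ≠ 0) :
    ENNReal.ofReal (1 + a.toReal / b.toReal) = 1 + a / b := by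
  rw [← ENNReal.toReal_div, ENNReal.ofReal_add zero_le_one toReal_nonneg, ENNReal.ofReal_one,
    ofReal_toReal (ENNReal.div_ne_top ha hb)]

lemma ENNReal.one_add_two_mul_le_one_add_sq (r : ℝ≥0∞) : 1 + 2 * r ≤ (1 + r) ^ 2 :=
  calc 1 + 2 * r ≤ 1 + 2 * r + r ^ 2 := le_self_add
    _ = (1 + r) ^ 2 := by ring

lemma convexOn_abs_sub_rpow (b : ℝ) {p : ℝ} (hp : 1 ≤ p) :
    ConvexOn ℝ univ fun t : ℝ => |b - t| ^ p := by
  have hdist : ConvexOn ℝ univ fun t : ℝ => |b - t| := by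
    simpa only [Real.dist_eq, abs_sub_comm] using convexOn_univ_dist b
  have himage : (fun t : ℝ => |b - t|) '' univ = Ici 0 := by
    ext s
    refine ⟨?_, fun hs => ⟨b - s, trivial, by simp [abs_of_nonneg (mem_Ici.1 hs)]⟩⟩
    rintro ⟨t, -, rfl⟩
    exact mem_Ici.2 (abs_nonneg _)
  have hrpow : ConvexOn ℝ ((fun t : ℝ => |b - t|) '' univ) fun s : ℝ => s ^ p :=
    himage ▸ convexOn_rpow hp
  refine hrpow.comp hdist ?_
  rw [himage]
  exact fun s hs t _ hst => Real.rpow_le_rpow hs hst (by linarith)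

lemma ofReal_abs_sub_average_rpow_mul_le {α : Type*} [MeasurableSpace α] {μ : Measure α}
    [IsFiniteMeasure μ] {p : ℝ} (hp : 1 ≤ p) {f : α → ℝ} (hf : MemLp f (ENNReal.ofReal p) μ)
    (b : ℝ) :
    ENNReal.ofReal (|b - ⨍ x, f x ∂μ| ^ p) * μ univ
      ≤ ∫⁻ x, ENNReal.ofReal (|b - f x| ^ p) ∂μ := by
  rcases eq_zero_or_neZero μ with rfl | hμ
  · simp
  have hp0 : ENNReal.ofReal p ≠ 0 := by simp only [ne_eq, ENNReal.ofReal_eq_zero]; linarith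
  have hg : Integrable (fun x => |b - f x| ^ p) μ := by
    simpa [ENNReal.toReal_ofReal (by linarith : 0 ≤ p), Real.norm_eq_abs] using
      ((memLp_const b).sub hf).integrable_norm_rpow hp0 ofReal_ne_top
  have hjensen : |b - ⨍ x, f x ∂μ| ^ p ≤ ⨍ x, |b - f x| ^ p ∂μ :=
    (convexOn_abs_sub_rpow b hp).map_average_le
      ((continuous_const.sub continuous_id).abs.rpow_const fun _ =>
        Or.inr (by linarith)).continuousOn
      isClosed_univ (ae_of_all _ fun _ => mem_univ _)
      (hf.integrable (by simpa using hp)) hg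
  calc ENNReal.ofReal (|b - ⨍ x, f x ∂μ| ^ p) * μ univ
      ≤ ENNReal.ofReal (⨍ x, |b - f x| ^ p ∂μ) * μ univ := by gcongr
    _ = ∫⁻ x, ENNReal.ofReal (|b - f x| ^ p) ∂μ := by
      rw [ofReal_average hg (ae_of_all _ fun _ => by positivity),
        ENNReal.div_mul_cancel (Measure.measure_univ_ne_zero.2 hμ.out) (measure_ne_top _ _)]

section PiecewiseConst

variable {α : Type*} [MeasurableSpace α] {μ : Measure α} {M Ω : Set α} [DecidablePred (· ∈ M)]

lemma setLIntegral_comp_piecewise_const (hM : MeasurableSet M) (hΩ : MeasurableSet Ω)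
    (G : ℝ → ℝ≥0∞) (φ : α → ℝ) (A : ℝ) :
    ∫⁻ x in Ω, G (M.piecewise φ (fun _ => A) x) ∂μ
      = ∫⁻ x in M ∩ Ω, G (φ x) ∂μ + G A * μ (Ω \ M) := by
  rw [← lintegral_inter_add_sdiff _ Ω hM, inter_comm Ω M, ← setLIntegral_const]
  congr 1
  · exact setLIntegral_congr_fun (hM.inter hΩ) fun x hx => by rw [piecewise_eq_of_mem _ _ _ hx.1]
  · exact setLIntegral_congr_fun (hΩ.diff hM) fun x hx => by
      rw [piecewise_eq_of_notMem _ _ _ hx.2]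

lemma setLIntegral_piecewise_const_rpow_le (hM : MeasurableSet M) (hΩ : MeasurableSet Ω)
    (φ : α → ℝ) {A p : ℝ} (hV0 : μ (M ∩ Ω) ≠ 0) (hVtop : μ (M ∩ Ω) ≠ ∞)
    (hA : ENNReal.ofReal (|A| ^ p) * μ (M ∩ Ω) ≤ ∫⁻ x in M ∩ Ω, ENNReal.ofReal (|φ x| ^ p) ∂μ) :
    ∫⁻ x in Ω, ENNReal.ofReal (|M.piecewise φ (fun _ => A) x| ^ p) ∂μ
      ≤ (1 + μ (Ω \ M) / μ (M ∩ Ω)) * ∫⁻ x in M ∩ Ω, ENNReal.ofReal (|φ x| ^ p) ∂μ := by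
  rw [setLIntegral_comp_piecewise_const hM hΩ (fun t => ENNReal.ofReal (|t| ^ p)), add_mul, one_mul]
  gcongr _ + ?_
  exact ENNReal.mul_le_div_mul_of_mul_le hV0 hVtop hA

lemma lintegral_lintegral_piecewise_const_le (hM : MeasurableSet M) (hΩ : MeasurableSet Ω)
    {φ : α → ℝ} {A p : ℝ} (hp : 0 < p) (hφ : AEMeasurable φ (μ.restrict (M ∩ Ω)))
    (hV0 : μ (M ∩ Ω) ≠ 0) (hVtop : μ (M ∩ Ω) ≠ ∞)
    (hA : ∀ b, ENNReal.ofReal (|b - A| ^ p) * μ (M ∩ Ω)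
      ≤ ∫⁻ y in M ∩ Ω, ENNReal.ofReal (|b - φ y| ^ p) ∂μ) :
    ∫⁻ x in Ω, ∫⁻ y in Ω,
        ENNReal.ofReal (|M.piecewise φ (fun _ => A) x - M.piecewise φ (fun _ => A) y| ^ p) ∂μ ∂μ
      ≤ (1 + 2 * (μ (Ω \ M) / μ (M ∩ Ω))) *
        ∫⁻ x in M ∩ Ω, ∫⁻ y in M ∩ Ω, ENNReal.ofReal (|φ x - φ y| ^ p) ∂μ ∂μ := by
  set W := μ (Ω \ M)
  set I := ∫⁻ x in M ∩ Ω, ∫⁻ y in M ∩ Ω, ENNReal.ofReal (|φ x - φ y| ^ p) ∂μ ∂μ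
  set J := ∫⁻ x in M ∩ Ω, ENNReal.ofReal (|φ x - A| ^ p) ∂μ
  have hinner (b : ℝ) := setLIntegral_comp_piecewise_const (μ := μ) hM hΩ
    (fun t => ENNReal.ofReal (|b - t| ^ p)) φ A
  have hJ : J * μ (M ∩ Ω) ≤ I := by
    rw [← lintegral_mul_const' _ _ hVtop]
    exact lintegral_mono fun x => hA (φ x)
  have hJ' : ∫⁻ y in M ∩ Ω, ENNReal.ofReal (|A - φ y| ^ p) ∂μ = J := by
    simp only [J, abs_sub_comm A]
  have hmeas : AEMeasurable (fun x => ENNReal.ofReal (|φ x - A| ^ p)) (μ.restrict (M ∩ Ω)) := by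
    fun_prop
  -- Pairs in `M × M` give `I`, pairs with exactly one point off `M` give `J * W` each, and pairs
  -- with both points off `M` give nothing.
  calc _ = I + J * W + J * W := by
        rw [setLIntegral_comp_piecewise_const hM hΩ
          (fun t => ∫⁻ y in Ω, ENNReal.ofReal (|t - M.piecewise φ (fun _ => A) y| ^ p) ∂μ)]
        simp only [hinner, sub_self, abs_zero, Real.zero_rpow hp.ne', ENNReal.ofReal_zero, zero_mul,
          add_zero, hJ']
        rw [lintegral_add_right' _ (hmeas.mul_const W), lintegral_mul_const'' _ hmeas]
    _ ≤ I + 2 * (W / μ (M ∩ Ω) * I) := by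
        rw [add_assoc, ← two_mul]
        gcongr I + 2 * ?_
        exact ENNReal.mul_le_div_mul_of_mul_le hV0 hVtop hJ
    _ = _ := by ring

end PiecewiseConst

section Cube

abbrev cube (d : ℕ) (a : ℝ) : Set (Fin d → ℝ) := {x | ∀ i, x i ∈ Ico 0 a}

variable {d : ℕ}

lemma measurableSet_cube (a : ℝ) : MeasurableSet (cube d a) := by
  rw [cube, ofPred_forall]
  exact MeasurableSet.iInter fun i => measurable_pi_apply i measurableSet_Ico

lemma volume_cube_ne_top (a : ℝ) : volume (cube d a) ≠ ∞ :=
  ((Metric.isBounded_Icc (0 : Fin d → ℝ) (fun _ => a)).subset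
    fun _ hx => ⟨fun i => (hx i).1, fun i => (hx i).2.le⟩).measure_lt_top.ne

lemma lintegral_cube_eq_pow_mul (n : ℕ) {f : (Fin d → ℝ) → ℝ≥0∞}
    (hf : ∀ (x : Fin d → ℝ) (j : Fin d → ℤ), f (x + fun i => (j i : ℝ)) = f x) :
    ∫⁻ x in cube d n, f x
      = (n : ℝ≥0∞) ^ d * ∫⁻ x in cube d 1, f x := by
  let shift (v : Fin d → Fin n) : Fin d → ℝ := fun i => ((v i : ℕ) : ℝ)
  let T (v : Fin d → Fin n) : Set (Fin d → ℝ) := (· - shift v) ⁻¹' cube d 1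
  have hT (v) (x : Fin d → ℝ) : x ∈ T v ↔ ∀ i, x i ∈ Ico ((v i : ℕ) : ℝ) ((v i : ℕ) + 1) := by
    simp only [T, shift, mem_preimage, mem_ofPred_eq, Pi.sub_apply, mem_Ico, sub_nonneg,
      sub_lt_iff_lt_add']
  have hcover : cube d n = ⋃ v, T v := by
    ext x
    simp only [mem_ofPred_eq, mem_iUnion, hT]
    constructor
    · intro hx
      refine ⟨fun i => ⟨⌊x i⌋₊, (Nat.floor_lt (hx i).1).2 (hx i).2⟩, fun i => ?_⟩
      exact ⟨Nat.floor_le (hx i).1, Nat.lt_floor_add_one _⟩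
    · rintro ⟨v, hv⟩ i
      have hvn : ((v i : ℕ) : ℝ) + 1 ≤ n := by exact_mod_cast (v i).2
      exact ⟨(Nat.cast_nonneg _).trans (hv i).1, (hv i).2.trans_le hvn⟩
  have hdisj : Pairwise (Function.onFun Disjoint T) := by
    refine fun v w hvw => disjoint_left.2 fun x hv hw => hvw (funext fun i => Fin.ext ?_)
    rw [← Nat.floor_eq_on_Ico _ _ ((hT v x).1 hv i), Nat.floor_eq_on_Ico _ _ ((hT w x).1 hw i)]
  have htranslate (v) : ∫⁻ x in T v, f x = ∫⁻ x in cube d 1, f x := by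
    have hpre : (· + shift v) ⁻¹' T v = cube d 1 := by ext x; simp [T]
    rw [← (measurePreserving_add_right volume (shift v)).setLIntegral_comp_preimage_emb
      (MeasurableEquiv.addRight (shift v)).measurableEmbedding, hpre]
    refine setLIntegral_congr_fun (measurableSet_cube 1) fun x _ => ?_
    simpa [shift] using hf x fun i => (v i : ℕ)
  rw [hcover, lintegral_iUnion (fun v => (measurableSet_cube 1).preimage (measurable_sub_const _))
    hdisj, tsum_fintype, Finset.sum_congr rfl fun v _ => htranslate v]
  simp

lemma setLIntegral_inter_cube_eq_pow_mul (n : ℕ) {S : Set (Fin d → ℝ)} (hS : MeasurableSet S)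
    (hS_per : ∀ (x : Fin d → ℝ) (j : Fin d → ℤ), (x + fun i => (j i : ℝ)) ∈ S ↔ x ∈ S)
    {f : (Fin d → ℝ) → ℝ≥0∞}
    (hf : ∀ (x : Fin d → ℝ) (j : Fin d → ℤ), f (x + fun i => (j i : ℝ)) = f x) :
    ∫⁻ x in S ∩ cube d n, f x
      = (n : ℝ≥0∞) ^ d * ∫⁻ x in S ∩ cube d 1, f x := by
  simpa only [setLIntegral_indicator hS] using
    lintegral_cube_eq_pow_mul n (f := S.indicator f) fun x j => by
      by_cases hx : x ∈ S <;> simp [hx, hS_per, hf]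

lemma volume_inter_cube_eq_pow_mul (n : ℕ) {S : Set (Fin d → ℝ)} (hS : MeasurableSet S)
    (hS_per : ∀ (x : Fin d → ℝ) (j : Fin d → ℤ), (x + fun i => (j i : ℝ)) ∈ S ↔ x ∈ S) :
    volume (S ∩ cube d n)
      = (n : ℝ≥0∞) ^ d * volume (S ∩ cube d 1) := by
  simpa only [setLIntegral_one] using
    setLIntegral_inter_cube_eq_pow_mul n hS hS_per (f := fun _ => 1) fun _ _ => rfl

lemma volume_inter_unitCube_ne_zero {M : Set (Fin d → ℝ)} (hM_open : IsOpen M)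
    (hM_ne : M.Nonempty)
    (hM_per : ∀ (x : Fin d → ℝ) (j : Fin d → ℤ), (x + fun i => (j i : ℝ)) ∈ M ↔ x ∈ M) :
    volume (M ∩ cube d 1) ≠ 0 := by
  intro h0
  have hcover : M ⊆ ⋃ j : Fin d → ℤ,
      (· + fun i => (j i : ℝ)) '' (M ∩ cube d 1) := by
    intro x hx
    refine mem_iUnion.2 ⟨fun i => ⌊x i⌋, fun i => Int.fract (x i), ⟨?_, ?_⟩, ?_⟩
    · convert (hM_per x fun i => -⌊x i⌋).2 hx using 1
      ext i
      simp [Int.fract, sub_eq_add_neg]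
    · exact fun i => ⟨Int.fract_nonneg _, Int.fract_lt_one _⟩
    · ext i; simp
  refine hM_open.measure_ne_zero volume hM_ne (measure_mono_null hcover ?_)
  refine measure_iUnion_null fun j => ?_
  rwa [image_add_right, measure_preimage_add_right]

lemma mul_volume_inter_cube_le_setLIntegral_iff {n : ℕ} (hn : 0 < n) {S : Set (Fin d → ℝ)}
    (hS : MeasurableSet S)
    (hS_per : ∀ (x : Fin d → ℝ) (j : Fin d → ℤ), (x + fun i => (j i : ℝ)) ∈ S ↔ x ∈ S)
    {f : (Fin d → ℝ) → ℝ≥0∞}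
    (hf : ∀ (x : Fin d → ℝ) (j : Fin d → ℤ), f (x + fun i => (j i : ℝ)) = f x) (a : ℝ≥0∞) :
    a * volume (S ∩ cube d n)
        ≤ ∫⁻ x in S ∩ cube d n, f x
      ↔ a * volume (S ∩ cube d 1)
        ≤ ∫⁻ x in S ∩ cube d 1, f x := by
  rw [volume_inter_cube_eq_pow_mul n hS hS_per, setLIntegral_inter_cube_eq_pow_mul n hS hS_per hf,
    mul_left_comm, ENNReal.mul_le_mul_iff_right (pow_ne_zero _ (Nat.cast_ne_zero.2 hn.ne'))
    (pow_ne_top (natCast_ne_top n))]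

lemma volume_sdiff_cube_div_volume_inter_cube {n : ℕ} (hn : 0 < n) {S : Set (Fin d → ℝ)}
    (hS : MeasurableSet S)
    (hS_per : ∀ (x : Fin d → ℝ) (j : Fin d → ℤ), (x + fun i => (j i : ℝ)) ∈ S ↔ x ∈ S) :
    volume (cube d n \ S)
        / volume (S ∩ cube d n)
      = volume (cube d 1 \ S)
        / volume (S ∩ cube d 1) := by
  rw [sdiff_eq_compl_inter, sdiff_eq_compl_inter,
    volume_inter_cube_eq_pow_mul n hS.compl fun x j => (hS_per x j).not,
    volume_inter_cube_eq_pow_mul n hS hS_per,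
    ENNReal.mul_div_mul_left _ _ (pow_ne_zero _ (Nat.cast_ne_zero.2 hn.ne'))
      (pow_ne_top (natCast_ne_top n))]

lemma volume_inter_cube_ne_zero {n : ℕ} (hn : 0 < n) {M : Set (Fin d → ℝ)} (hM_open : IsOpen M)
    (hM_ne : M.Nonempty)
    (hM_per : ∀ (x : Fin d → ℝ) (j : Fin d → ℤ), (x + fun i => (j i : ℝ)) ∈ M ↔ x ∈ M) :
    volume (M ∩ cube d n) ≠ 0 := by
  rw [volume_inter_cube_eq_pow_mul n hM_open.measurableSet hM_per]
  exact mul_ne_zero (pow_ne_zero _ (Nat.cast_ne_zero.2 hn.ne'))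
    (volume_inter_unitCube_ne_zero hM_open hM_ne hM_per)

end Cube

/-- periodic extension from a periodic open set `M` with control of the
`Lᵖ` norm and of the convolution-type double-integral energy. -/
theorem stmt_15 {d : ℕ} (M : Set (Fin d → ℝ)) (hM_open : IsOpen M) (hM_ne : M.Nonempty)
    (hM_per : ∀ (x : Fin d → ℝ) (j : Fin d → ℤ), (x + fun i => (j i : ℝ)) ∈ M ↔ x ∈ M)
    (n : ℕ) (hn : 0 < n) (p : ℝ) (hp : 1 ≤ p)
    (φ : (Fin d → ℝ) → ℝ)
    (hφ_per : ∀ (x : Fin d → ℝ) (j : Fin d → ℤ), φ (x + fun i => (j i : ℝ)) = φ x)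
    (hφ_mem : MemLp φ (ENNReal.ofReal p)
      (volume.restrict (M ∩ {x : Fin d → ℝ | ∀ i, x i ∈ Set.Ico (0:ℝ) (n:ℝ)}))) :
    let Yc : Set (Fin d → ℝ) := {x | ∀ i, x i ∈ Set.Ico (0:ℝ) 1}
    let nY : Set (Fin d → ℝ) := {x | ∀ i, x i ∈ Set.Ico (0:ℝ) (n:ℝ)}
    let c : ℝ := 1 + (volume (Yc \ M)).toReal / (volume (M ∩ Yc)).toReal
    ∃ φt : (Fin d → ℝ) → ℝ,
      (∀ (x : Fin d → ℝ) (j : Fin d → ℤ), φt (x + fun i => (j i : ℝ)) = φt x) ∧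
      (∀ x ∈ M, φt x = φ x) ∧
      (∫⁻ y in Yc, ENNReal.ofReal (|φt y| ^ p)
        ≤ ENNReal.ofReal c * ∫⁻ y in M ∩ Yc, ENNReal.ofReal (|φ y| ^ p)) ∧
      (∫⁻ x in nY, ∫⁻ y in nY, ENNReal.ofReal (|φt x - φt y| ^ p)
        ≤ ENNReal.ofReal (c ^ 2) *
          ∫⁻ x in M ∩ nY, ∫⁻ y in M ∩ nY, ENNReal.ofReal (|φ x - φ y| ^ p)) := by
  intro Yc nY c
  classical
  have hM := hM_open.measurableSet
  have hVntop : volume (M ∩ nY) ≠ ∞ :=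
    measure_ne_top_of_subset inter_subset_right (volume_cube_ne_top n)
  have : IsFiniteMeasure (volume.restrict (M ∩ nY)) := isFiniteMeasure_restrict.2 hVntop
  set A := ⨍ x, φ x ∂volume.restrict (M ∩ nY)
  have hjensen (b : ℝ) : ENNReal.ofReal (|b - A| ^ p) * volume (M ∩ nY)
      ≤ ∫⁻ y in M ∩ nY, ENNReal.ofReal (|b - φ y| ^ p) := by
    simpa only [Measure.restrict_apply_univ] using ofReal_abs_sub_average_rpow_mul_le hp hφ_mem b
  have hVY0 : volume (M ∩ Yc) ≠ 0 := volume_inter_unitCube_ne_zero hM_open hM_ne hM_per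
  have hc : ENNReal.ofReal c = 1 + volume (Yc \ M) / volume (M ∩ Yc) :=
    ENNReal.ofReal_one_add_toReal_div
      (measure_ne_top_of_subset sdiff_subset (volume_cube_ne_top 1)) hVY0
  refine ⟨M.piecewise φ fun _ => A, fun x j => ?_, fun x hx => piecewise_eq_of_mem _ _ _ hx, ?_, ?_⟩
  · by_cases hx : x ∈ M <;> simp [Set.piecewise, hx, hM_per, hφ_per]
  · rw [hc]
    refine setLIntegral_piecewise_const_rpow_le hM (measurableSet_cube 1) φ hVY0
      (measure_ne_top_of_subset inter_subset_right (volume_cube_ne_top 1)) ?_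
    refine (mul_volume_inter_cube_le_setLIntegral_iff hn hM hM_per
      (f := fun y => ENNReal.ofReal (|φ y| ^ p)) (fun x j => by rw [hφ_per]) _).1 ?_
    simpa only [zero_sub, abs_neg] using hjensen 0
  · calc _ ≤ (1 + 2 * (volume (nY \ M) / volume (M ∩ nY))) *
          ∫⁻ x in M ∩ nY, ∫⁻ y in M ∩ nY, ENNReal.ofReal (|φ x - φ y| ^ p) :=
        lintegral_lintegral_piecewise_const_le hM (measurableSet_cube n) (by linarith)
          hφ_mem.1.aemeasurable (volume_inter_cube_ne_zero hn hM_open hM_ne hM_per) hVntop hjensen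
      _ ≤ _ := by
        rw [volume_sdiff_cube_div_volume_inter_cube hn hM hM_per,
          ENNReal.ofReal_pow (by positivity), hc]
        gcongr
        exact ENNReal.one_add_two_mul_le_one_add_sq _
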